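/- arXiv:2601.05700 — 3 statements merged into one kernel-verified Lean document; each statement's English description precedes it below -/
import Mathlib

section
/- Let n ≥ 1 and m ≥ 1. Let 𝒩 ⊆ ℝ^m be a nonempty compact set, let K : S^n → [0, ∞) be σ-integrable with ∫_{S^n} K dσ = 1, and let Φ : S^n → ℝ^m be σ-measurable with Φ(ξ) ∈ 𝒩 for σ-almost every ξ. Then dist(∫_{S^n} K(ξ)Φ(ξ) dσ(ξ), 𝒩) ≤ ∫_{S^n} ∫_{S^n} K(ξ)K(ζ)|Φ(ξ) − Φ(ζ)| dσ(ξ) dσ(ζ). -/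
open MeasureTheory
open scoped MeasureTheory ENNReal

/-!
With `c = ∫ K Φ` and `∫ K = 1`, for every `y` we have `c - y = ∫ K(ζ) (Φ ζ - y) dζ`, so
`‖c - y‖ ≤ G y := ∫ K(ζ) ‖y - Φ ζ‖ dζ`. Taking `y = Φ ξ ∈ 𝒩` gives `dist(c, 𝒩) ≤ G (Φ ξ)` for
almost every `ξ`; averaging this against `K(ξ) dξ` yields the double integral. Since `K` is a
probability density, `G` is `1`-Lipschitz; this gives the measurability and essential boundedness
of `G ∘ Φ` needed for `ξ ↦ K ξ * G (Φ ξ)` to be integrable.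
-/

section WeightedAverage

variable {α E : Type*} [MeasurableSpace α] [NormedAddCommGroup E] {μ : Measure α}
  {K : α → ℝ} {Φ : α → E}

lemma integrable_mul_norm_sub (hK : Integrable K μ) (hΦ : MemLp Φ ∞ μ) (y : E) :
    Integrable (fun ζ => K ζ * ‖y - Φ ζ‖) μ :=
  hK.mul_of_top_left ((memLp_top_const y).sub hΦ).norm

lemma integral_mul_norm_sub_le_add_dist (hK0 : 0 ≤ᵐ[μ] K) (hK : Integrable K μ)
    (hK1 : ∫ ζ, K ζ ∂μ = 1) (hΦ : MemLp Φ ∞ μ) (y y' : E) :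
    ∫ ζ, K ζ * ‖y - Φ ζ‖ ∂μ ≤ ∫ ζ, K ζ * ‖y' - Φ ζ‖ ∂μ + dist y y' := by
  calc ∫ ζ, K ζ * ‖y - Φ ζ‖ ∂μ
      ≤ ∫ ζ, (K ζ * ‖y' - Φ ζ‖ + K ζ * dist y y') ∂μ := by
        refine integral_mono_ae (integrable_mul_norm_sub hK hΦ y)
          ((integrable_mul_norm_sub hK hΦ y').add (hK.mul_const _)) ?_
        filter_upwards [hK0] with ζ hKζ
        rw [← mul_add, dist_eq_norm]
        gcongr
        exact (norm_sub_le_norm_sub_add_norm_sub y y' (Φ ζ)).trans_eq (add_comm _ _)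
    _ = ∫ ζ, K ζ * ‖y' - Φ ζ‖ ∂μ + dist y y' := by
        rw [integral_add (integrable_mul_norm_sub hK hΦ y') (hK.mul_const _), integral_mul_const,
          hK1, one_mul]

lemma lipschitzWith_integral_mul_norm_sub (hK0 : 0 ≤ᵐ[μ] K) (hK : Integrable K μ)
    (hK1 : ∫ ζ, K ζ ∂μ = 1) (hΦ : MemLp Φ ∞ μ) :
    LipschitzWith 1 fun y => ∫ ζ, K ζ * ‖y - Φ ζ‖ ∂μ :=
  LipschitzWith.of_le_add (integral_mul_norm_sub_le_add_dist hK0 hK hK1 hΦ)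

lemma integrable_mul_integral_mul_norm_sub (hK0 : 0 ≤ᵐ[μ] K) (hK : Integrable K μ)
    (hK1 : ∫ ζ, K ζ ∂μ = 1) (hΦ : MemLp Φ ∞ μ) :
    Integrable (fun ξ => K ξ * ∫ ζ, K ζ * ‖Φ ξ - Φ ζ‖ ∂μ) μ := by
  set G : E → ℝ := fun y => ∫ ζ, K ζ * ‖y - Φ ζ‖ ∂μ
  have hG := lipschitzWith_integral_mul_norm_sub hK0 hK hK1 hΦ
  refine hK.mul_of_top_left (((memLp_top_const ‖G 0‖).add hΦ.norm).of_le
    (hG.continuous.comp_aestronglyMeasurable hΦ.1) (Filter.Eventually.of_forall fun ξ => ?_))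
  calc ‖G (Φ ξ)‖ ≤ ‖G 0‖ + ‖Φ ξ‖ := by
        simpa only [dist_zero_right, NNReal.coe_one, one_mul] using
          norm_le_norm_add_const_of_dist_le (hG.dist_le_mul (Φ ξ) 0)
    _ ≤ ‖‖G 0‖ + ‖Φ ξ‖‖ := Real.le_norm_self _

variable [NormedSpace ℝ E] [CompleteSpace E]

lemma norm_integral_smul_sub_le (hK0 : 0 ≤ᵐ[μ] K) (hK : Integrable K μ)
    (hK1 : ∫ ζ, K ζ ∂μ = 1) (hΦ : MemLp Φ ∞ μ) (y : E) :
    ‖(∫ ζ, K ζ • Φ ζ ∂μ) - y‖ ≤ ∫ ζ, K ζ * ‖y - Φ ζ‖ ∂μ := by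
  have hKΦ : Integrable (fun ζ => K ζ • Φ ζ) μ := hK.smul_of_top_left hΦ
  have hshift : (∫ ζ, K ζ • Φ ζ ∂μ) - y = ∫ ζ, K ζ • (Φ ζ - y) ∂μ := by
    simp_rw [smul_sub]
    rw [integral_sub hKΦ (hK.smul_const y), integral_smul_const, hK1, one_smul]
  rw [hshift]
  refine (norm_integral_le_integral_norm _).trans_eq (integral_congr_ae ?_)
  filter_upwards [hK0] with ζ hKζ
  rw [norm_smul, Real.norm_of_nonneg hKζ, norm_sub_rev]

theorem infDist_integral_smul_le_integral_integral {s : Set E} (hK0 : 0 ≤ᵐ[μ] K)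
    (hK : Integrable K μ) (hK1 : ∫ ζ, K ζ ∂μ = 1) (hΦ : MemLp Φ ∞ μ)
    (hΦs : ∀ᵐ ξ ∂μ, Φ ξ ∈ s) :
    Metric.infDist (∫ ξ, K ξ • Φ ξ ∂μ) s
      ≤ ∫ ξ, ∫ ζ, K ξ * K ζ * ‖Φ ξ - Φ ζ‖ ∂μ ∂μ := by
  set c := ∫ ξ, K ξ • Φ ξ ∂μ
  have hpointwise : ∀ᵐ ξ ∂μ,
      K ξ * Metric.infDist c s ≤ K ξ * ∫ ζ, K ζ * ‖Φ ξ - Φ ζ‖ ∂μ := by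
    filter_upwards [hK0, hΦs] with ξ hKξ hΦξ
    gcongr
    calc Metric.infDist c s ≤ ‖c - Φ ξ‖ := by
          simpa only [dist_eq_norm] using Metric.infDist_le_dist_of_mem hΦξ
      _ ≤ _ := norm_integral_smul_sub_le hK0 hK hK1 hΦ (Φ ξ)
  calc Metric.infDist c s = ∫ ξ, K ξ * Metric.infDist c s ∂μ := by
        rw [integral_mul_const, hK1, one_mul]
    _ ≤ ∫ ξ, K ξ * ∫ ζ, K ζ * ‖Φ ξ - Φ ζ‖ ∂μ ∂μ :=
        integral_mono_ae (hK.mul_const _)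
          (integrable_mul_integral_mul_norm_sub hK0 hK hK1 hΦ) hpointwise
    _ = ∫ ξ, ∫ ζ, K ξ * K ζ * ‖Φ ξ - Φ ζ‖ ∂μ ∂μ := by
        simp_rw [mul_assoc, integral_const_mul]

end WeightedAverage

theorem dist_of_average_le_general (n m : ℕ)
    (𝒩 : Set (EuclideanSpace ℝ (Fin m))) (h𝒩c : IsCompact 𝒩)
    (K : EuclideanSpace ℝ (Fin (n + 1)) → ℝ)
    (Φ : EuclideanSpace ℝ (Fin (n + 1)) → EuclideanSpace ℝ (Fin m))
    (hK0 : ∀ ξ ∈ Metric.sphere (0 : EuclideanSpace ℝ (Fin (n + 1))) 1, 0 ≤ K ξ)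
    (hKint : IntegrableOn K (Metric.sphere (0 : EuclideanSpace ℝ (Fin (n + 1))) 1) μH[(n : ℝ)])
    (hK1 : (∫ ξ in Metric.sphere (0 : EuclideanSpace ℝ (Fin (n + 1))) 1, K ξ ∂μH[(n : ℝ)]) = 1)
    (hΦm : AEStronglyMeasurable Φ
      (μH[(n : ℝ)].restrict (Metric.sphere (0 : EuclideanSpace ℝ (Fin (n + 1))) 1)))
    (hΦ𝒩 : ∀ᵐ ξ ∂(μH[(n : ℝ)].restrict (Metric.sphere (0 : EuclideanSpace ℝ (Fin (n + 1))) 1)),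
      Φ ξ ∈ 𝒩) :
    Metric.infDist
        (∫ ξ in Metric.sphere (0 : EuclideanSpace ℝ (Fin (n + 1))) 1, K ξ • Φ ξ ∂μH[(n : ℝ)]) 𝒩
      ≤ ∫ ξ in Metric.sphere (0 : EuclideanSpace ℝ (Fin (n + 1))) 1,
          ∫ ζ in Metric.sphere (0 : EuclideanSpace ℝ (Fin (n + 1))) 1,
            K ξ * K ζ * ‖Φ ξ - Φ ζ‖ ∂μH[(n : ℝ)] ∂μH[(n : ℝ)] := by
  have hK0ae : 0 ≤ᵐ[μH[(n : ℝ)].restrict (Metric.sphere 0 1)] K :=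
    (ae_restrict_mem Metric.isClosed_sphere.measurableSet).mono hK0
  obtain ⟨C, hC⟩ := h𝒩c.isBounded.exists_norm_le
  have hΦbdd : MemLp Φ ∞ (μH[(n : ℝ)].restrict (Metric.sphere 0 1)) :=
    memLp_top_of_bound hΦm C (hΦ𝒩.mono fun ξ hξ => hC _ hξ)
  exact infDist_integral_smul_le_integral_integral hK0ae hKint hK1 hΦbdd hΦ𝒩

/-- Let `𝒩 ⊆ ℝᵐ` be nonempty compact, `K : Sⁿ → [0,∞)` σ-integrable with `∫ K dσ = 1`,
and `Φ : Sⁿ → ℝᵐ` σ-measurable with `Φ(ξ) ∈ 𝒩` σ-a.e.  Then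
`dist(∫ K Φ dσ, 𝒩) ≤ ∫∫ K(ξ)K(ζ)|Φ(ξ) − Φ(ζ)| dσ(ξ) dσ(ζ)`. -/
theorem dist_of_average_le (n m : ℕ) (hn : 1 ≤ n) (hm : 1 ≤ m)
    (𝒩 : Set (EuclideanSpace ℝ (Fin m))) (h𝒩ne : 𝒩.Nonempty) (h𝒩c : IsCompact 𝒩)
    (K : EuclideanSpace ℝ (Fin (n + 1)) → ℝ)
    (Φ : EuclideanSpace ℝ (Fin (n + 1)) → EuclideanSpace ℝ (Fin m))
    (hK0 : ∀ ξ ∈ Metric.sphere (0 : EuclideanSpace ℝ (Fin (n + 1))) 1, 0 ≤ K ξ)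
    (hKint : IntegrableOn K (Metric.sphere (0 : EuclideanSpace ℝ (Fin (n + 1))) 1) μH[(n : ℝ)])
    (hK1 : (∫ ξ in Metric.sphere (0 : EuclideanSpace ℝ (Fin (n + 1))) 1, K ξ ∂μH[(n : ℝ)]) = 1)
    (hΦm : AEStronglyMeasurable Φ
      (μH[(n : ℝ)].restrict (Metric.sphere (0 : EuclideanSpace ℝ (Fin (n + 1))) 1)))
    (hΦ𝒩 : ∀ᵐ ξ ∂(μH[(n : ℝ)].restrict (Metric.sphere (0 : EuclideanSpace ℝ (Fin (n + 1))) 1)),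
      Φ ξ ∈ 𝒩) :
    Metric.infDist
        (∫ ξ in Metric.sphere (0 : EuclideanSpace ℝ (Fin (n + 1))) 1, K ξ • Φ ξ ∂μH[(n : ℝ)]) 𝒩
      ≤ ∫ ξ in Metric.sphere (0 : EuclideanSpace ℝ (Fin (n + 1))) 1,
          ∫ ζ in Metric.sphere (0 : EuclideanSpace ℝ (Fin (n + 1))) 1,
            K ξ * K ζ * ‖Φ ξ - Φ ζ‖ ∂μH[(n : ℝ)] ∂μH[(n : ℝ)] :=
  dist_of_average_le_general n m 𝒩 h𝒩c K Φ hK0 hKint hK1 hΦm hΦ𝒩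
end

section
/- Let n ≥ 2 and m ≥ 1. Let 𝒩 ⊆ ℝ^m be a nonempty compact set, let K : S^n → [0, ∞) satisfy ∫_{S^n} K dσ = 1 and K ∈ L^{n/(n−1)}(S^n, σ), and let Φ : S^n → ℝ^m be σ-measurable with Φ(ξ) ∈ 𝒩 for σ-almost every ξ.isThen dist(∫_{S^n} K(ξ)Φ(ξ) dσ(ξ), 𝒩) ≤ ‖K‖²_{L^{n/(n−1)}(S^n)} · ( ∫_{S^n} ∫_{S^n} |Φ(ξ) − Φ(ζ)|^n dσ(ξ) dσ(ζ) )^{1/n}. -/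
/-! For `ζ` with `Φ ζ ∈ 𝒩`, `dist (∫ K Φ, 𝒩) ≤ ‖∫ K (Φ ζ - Φ)‖ ≤ ∫ K(ξ) ‖Φ ζ - Φ ξ‖ dξ`, and Hölder
bounds this by `‖K‖_q G(ζ)^{1/n}` with `G ζ = ∫ ‖Φ ζ - Φ ξ‖ⁿ dξ`. Averaging against the probability
density `K(ζ) dζ` and applying Hölder once more gives the claim, on any finite measure space.

`μH[n]` is finite on `Sⁿ` because the sphere is covered by the radial projections of the `2(n+1)`
faces of the cube `[-1, 1]ⁿ⁺¹`, and the radial projection is 2-Lipschitz outside the unit ball. -/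

open MeasureTheory Metric Set
open scoped ENNReal

theorem lipschitzOnWith_inv_norm_smul {E : Type*} [NormedAddCommGroup E] [NormedSpace ℝ E] :
    LipschitzOnWith 2 (fun x : E => ‖x‖⁻¹ • x) {x | 1 ≤ ‖x‖} := by
  refine LipschitzOnWith.of_dist_le_mul fun x hx y hy => ?_
  have hy0 : y ≠ 0 := norm_pos_iff.mp (one_pos.trans_le hy)
  have hdecomp : ‖x‖⁻¹ • x - ‖y‖⁻¹ • y = ‖x‖⁻¹ • (x - y + (‖y‖ - ‖x‖) • ‖y‖⁻¹ • y) := by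
    have : ‖x‖ ≠ 0 := (one_pos.trans_le (α := ℝ) hx).ne'
    match_scalars
    · field_simp
    · field_simp
      ring
  rw [dist_eq_norm, dist_eq_norm, hdecomp, norm_smul, norm_inv, norm_norm]
  calc ‖x‖⁻¹ * ‖x - y + (‖y‖ - ‖x‖) • ‖y‖⁻¹ • y‖ ≤ 1 * (‖x - y‖ + ‖x - y‖) := by
        gcongr
        · exact inv_le_one_of_one_le₀ hx
        · refine (norm_add_le _ _).trans (add_le_add_right ?_ _)
          rw [norm_smul, norm_smul, norm_inv, norm_norm,
            inv_mul_cancel₀ (norm_ne_zero_iff.mpr hy0), mul_one, Real.norm_eq_abs, abs_sub_comm]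
          exact abs_norm_sub_norm_le x y
    _ = (2 : NNReal) * ‖x - y‖ := by push_cast; ring

namespace EuclideanSpace

variable {n : ℕ}

def insertNth (i : Fin (n + 1)) (c : ℝ) (y : EuclideanSpace ℝ (Fin n)) :
    EuclideanSpace ℝ (Fin (n + 1)) :=
  WithLp.toLp 2 (i.insertNth c y.ofLp)

theorem isometry_insertNth (i : Fin (n + 1)) (c : ℝ) : Isometry (insertNth i c) := by
  refine Isometry.of_dist_eq fun y z => ?_
  simp [EuclideanSpace.dist_eq, insertNth, Fin.sum_univ_succAbove _ i]

theorem one_le_norm_insertNth (i : Fin (n + 1)) {c : ℝ} (hc : |c| = 1)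
    (y : EuclideanSpace ℝ (Fin n)) : 1 ≤ ‖insertNth i c y‖ := by
  simpa [insertNth, hc] using PiLp.norm_apply_le (insertNth i c y) i

theorem sphere_subset_iUnion_image_insertNth :
    sphere (0 : EuclideanSpace ℝ (Fin (n + 1))) 1 ⊆
      ⋃ (i : Fin (n + 1)) (c ∈ ({-1, 1} : Set ℝ)),
        (fun y => ‖insertNth i c y‖⁻¹ • insertNth i c y) ''
          (WithLp.toLp 2 '' closedBall (0 : Fin n → ℝ) 1) := by
  intro x hx
  rw [mem_sphere_zero_iff_norm] at hx
  obtain ⟨i, -, hi⟩ := Finset.exists_max_image Finset.univ (fun j => |x j|) Finset.univ_nonempty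
  have hxi : 0 < |x i| := by
    by_contra! h
    have : x = 0 := by
      ext j
      simpa using (hi j (Finset.mem_univ j)).trans h
    simp [this] at hx
  set z := |x i|⁻¹ • x
  have hz : ‖z‖⁻¹ • z = x := by
    rw [norm_smul, hx, mul_one, norm_inv, Real.norm_eq_abs, abs_abs, smul_smul, inv_inv,
      mul_inv_cancel₀ hxi.ne', one_smul]
  simp only [mem_iUnion]
  refine ⟨i, z i, ?_, WithLp.toLp 2 (i.removeNth z.ofLp), ⟨_, ?_, rfl⟩, ?_⟩
  · have : |z i| = 1 := by simp [z, abs_mul, inv_mul_cancel₀ hxi.ne']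
    rcases abs_eq zero_le_one |>.mp this with h | h <;> simp [h]
  · rw [mem_closedBall_zero_iff, pi_norm_le_iff_of_nonneg zero_le_one]
    intro k
    simpa [z, Fin.removeNth, abs_mul, inv_mul_le_one₀ hxi] using hi _ (Finset.mem_univ _)
  · simpa [insertNth] using hz

theorem hausdorffMeasure_sphere_lt_top :
    μH[n] (sphere (0 : EuclideanSpace ℝ (Fin (n + 1))) 1) < ∞ := by
  have := isAddHaarMeasure_hausdorffMeasure (E := EuclideanSpace ℝ (Fin n))
  rw [finrank_euclideanSpace_fin] at this
  refine (measure_mono sphere_subset_iUnion_image_insertNth).trans_lt <|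
    (measure_iUnion_fintype_le _ _).trans_lt <| ENNReal.sum_lt_top.mpr fun i _ =>
      measure_biUnion_lt_top (toFinite _) fun c hc => ?_
  have hc1 : |c| = 1 := by rcases hc with rfl | rfl <;> simp
  have hlip := lipschitzOnWith_inv_norm_smul.comp (isometry_insertNth i c).lipschitz.lipschitzOnWith
    (s := WithLp.toLp 2 '' closedBall (0 : Fin n → ℝ) 1) fun y _ => one_le_norm_insertNth i hc1 y
  refine (hlip.hausdorffMeasure_image_le n.cast_nonneg).trans_lt <| ENNReal.mul_lt_top
    (ENNReal.rpow_lt_top_of_nonneg n.cast_nonneg (by simp)) ?_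
  exact ((isCompact_closedBall _ _).image (PiLp.continuous_toLp 2 _)).measure_lt_top

end EuclideanSpace

section WeightedAverage

variable {α E : Type*} [MeasurableSpace α] {μ : Measure α}
  [NormedAddCommGroup E] [NormedSpace ℝ E] [CompleteSpace E]

theorem norm_sub_integral_smul_le {K : α → ℝ} {Φ : α → E} (hK0 : 0 ≤ᵐ[μ] K)
    (hKint : Integrable K μ) (hK1 : ∫ ξ, K ξ ∂μ = 1) (hKΦ : Integrable (fun ξ => K ξ • Φ ξ) μ)
    (y : E) : ‖y - ∫ ξ, K ξ • Φ ξ ∂μ‖ ≤ ∫ ξ, K ξ * ‖y - Φ ξ‖ ∂μ := by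
  have hshift : y - ∫ ξ, K ξ • Φ ξ ∂μ = ∫ ξ, K ξ • (y - Φ ξ) ∂μ := by
    simp_rw [smul_sub]
    rw [integral_sub (hKint.smul_const y) hKΦ, integral_smul_const, hK1, one_smul]
  rw [hshift]
  refine (norm_integral_le_integral_norm _).trans_eq (integral_congr_ae ?_)
  filter_upwards [hK0] with ξ hξ
  rw [norm_smul, Real.norm_of_nonneg hξ]

variable [IsFiniteMeasure μ] {p q : ℝ}

theorem integral_mul_le_of_norm_le (hpq : p.HolderConjugate q) {K g : α → ℝ} {C : ℝ}
    (hK0 : 0 ≤ᵐ[μ] K) (hKq : MemLp K (ENNReal.ofReal q) μ) (hg : AEStronglyMeasurable g μ)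
    (hg0 : 0 ≤ᵐ[μ] g) (hgC : ∀ᵐ ξ ∂μ, ‖g ξ‖ ≤ C) :
    ∫ ξ, K ξ * g ξ ∂μ ≤ (∫ ξ, K ξ ^ q ∂μ) ^ (1 / q) * (∫ ξ, g ξ ^ p ∂μ) ^ (1 / p) :=
  integral_mul_le_Lp_mul_Lq_of_nonneg hpq.symm hK0 hg0 hKq (.of_bound hg C hgC)

theorem infDist_integral_smul_le (hpq : p.HolderConjugate q) {K : α → ℝ} {Φ : α → E}
    {N : Set E} (hN : Bornology.IsBounded N) (hK0 : 0 ≤ᵐ[μ] K) (hK1 : ∫ ξ, K ξ ∂μ = 1)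
    (hKq : MemLp K (ENNReal.ofReal q) μ) (hΦ : AEStronglyMeasurable Φ μ)
    (hΦN : ∀ᵐ ξ ∂μ, Φ ξ ∈ N) :
    infDist (∫ ξ, K ξ • Φ ξ ∂μ) N ≤
      ((∫ ξ, K ξ ^ q ∂μ) ^ (1 / q)) ^ 2 * (∫ ξ, ∫ ζ, ‖Φ ξ - Φ ζ‖ ^ p ∂μ ∂μ) ^ (1 / p) := by
  obtain ⟨C, hC⟩ := hN.exists_norm_le
  have hΦC : ∀ᵐ ξ ∂μ, ‖Φ ξ‖ ≤ C := hΦN.mono fun ξ => hC _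
  have hKint : Integrable K μ := hKq.integrable (by simpa using hpq.symm.lt.le)
  have hKΦ : Integrable (fun ξ => K ξ • Φ ξ) μ := hKint.smul_bdd C hΦ hΦC
  set A := (∫ ξ, K ξ ^ q ∂μ) ^ (1 / q)
  set G : α → ℝ := fun ζ => ∫ ξ, ‖Φ ζ - Φ ξ‖ ^ p ∂μ
  have hdiff : ∀ᵐ ζ ∂μ, ∀ᵐ ξ ∂μ, ‖‖Φ ζ - Φ ξ‖‖ ≤ 2 * C := by
    filter_upwards [hΦC] with ζ hζ
    filter_upwards [hΦC] with ξ hξ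
    linarith [norm_norm (Φ ζ - Φ ξ), norm_sub_le (Φ ζ) (Φ ξ)]
  have hpointwise : ∀ᵐ ζ ∂μ, infDist (∫ ξ, K ξ • Φ ξ ∂μ) N ≤ A * G ζ ^ (1 / p) := by
    filter_upwards [hΦN, hdiff] with ζ hζ hζC
    calc infDist (∫ ξ, K ξ • Φ ξ ∂μ) N
        ≤ ‖Φ ζ - ∫ ξ, K ξ • Φ ξ ∂μ‖ := by
          rw [← dist_eq_norm, dist_comm]; exact infDist_le_dist_of_mem hζ
      _ ≤ ∫ ξ, K ξ * ‖Φ ζ - Φ ξ‖ ∂μ := norm_sub_integral_smul_le hK0 hKint hK1 hKΦ _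
      _ ≤ A * G ζ ^ (1 / p) :=
          integral_mul_le_of_norm_le hpq hK0 hKq (aestronglyMeasurable_const.sub hΦ).norm
            (.of_forall fun _ => norm_nonneg _) hζC
  have hG0 : 0 ≤ G := fun ζ => integral_nonneg fun ξ => by positivity
  have hGp : ∀ ζ, (G ζ ^ (1 / p)) ^ p = G ζ := fun ζ => by
    rw [← Real.rpow_mul (hG0 ζ), one_div_mul_cancel hpq.ne_zero, Real.rpow_one]
  have hG : AEStronglyMeasurable (fun ζ => G ζ ^ (1 / p)) μ :=
    ((AEStronglyMeasurable.integral_prod_right' (f := fun z : α × α => ‖Φ z.1 - Φ z.2‖ ^ p)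
      ((hΦ.comp_fst.sub hΦ.comp_snd).norm.aemeasurable.pow_const p).aestronglyMeasurable
      ).aemeasurable.pow_const _).aestronglyMeasurable
  have hGC : ∀ᵐ ζ ∂μ, ‖G ζ ^ (1 / p)‖ ≤ ((2 * C) ^ p * μ.real Set.univ) ^ (1 / p) := by
    filter_upwards [hdiff] with ζ hζ
    rw [Real.norm_of_nonneg (by positivity)]
    refine Real.rpow_le_rpow (hG0 ζ) ?_ (one_div_nonneg.mpr hpq.nonneg)
    calc G ζ ≤ ∫ _ξ, (2 * C) ^ p ∂μ :=
          integral_mono_of_nonneg (.of_forall fun ξ => by positivity) (integrable_const _) <|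
            hζ.mono fun ξ hξ => Real.rpow_le_rpow (norm_nonneg _) (by simpa using hξ) hpq.nonneg
      _ = (2 * C) ^ p * μ.real Set.univ := by rw [integral_const, smul_eq_mul, mul_comm]
  have hA : 0 ≤ A :=
    Real.rpow_nonneg (integral_nonneg_of_ae (hK0.mono fun ξ h => Real.rpow_nonneg h q)) _
  calc infDist (∫ ξ, K ξ • Φ ξ ∂μ) N
      = ∫ ζ, K ζ * infDist (∫ ξ, K ξ • Φ ξ ∂μ) N ∂μ := by rw [integral_mul_const, hK1, one_mul]
    _ ≤ ∫ ζ, A * (K ζ * G ζ ^ (1 / p)) ∂μ := by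
        refine integral_mono_ae (hKint.mul_const _) ((hKint.mul_bdd hG hGC).const_mul A) ?_
        filter_upwards [hpointwise, hK0] with ζ hζ hKζ
        rw [mul_left_comm]
        exact mul_le_mul_of_nonneg_left hζ hKζ
    _ = A * ∫ ζ, K ζ * G ζ ^ (1 / p) ∂μ := integral_const_mul _ _
    _ ≤ A * (A * (∫ ζ, G ζ ∂μ) ^ (1 / p)) := by
        gcongr
        simpa only [hGp] using integral_mul_le_of_norm_le hpq hK0 hKq hG
          (.of_forall fun ζ => by positivity) hGC
    _ = A ^ 2 * (∫ ξ, ∫ ζ, ‖Φ ξ - Φ ζ‖ ^ p ∂μ ∂μ) ^ (1 / p) := by ring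

end WeightedAverage

theorem dist_of_average_le_holder_general (n m : ℕ) (hn : 2 ≤ n)
    (𝒩 : Set (EuclideanSpace ℝ (Fin m))) (h𝒩c : IsCompact 𝒩)
    (K : EuclideanSpace ℝ (Fin (n + 1)) → ℝ)
    (Φ : EuclideanSpace ℝ (Fin (n + 1)) → EuclideanSpace ℝ (Fin m))
    (hK0 : ∀ ξ ∈ Metric.sphere (0 : EuclideanSpace ℝ (Fin (n + 1))) 1, 0 ≤ K ξ)
    (hKint : IntegrableOn K (Metric.sphere (0 : EuclideanSpace ℝ (Fin (n + 1))) 1) μH[(n : ℝ)])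
    (hK1 : (∫ ξ in Metric.sphere (0 : EuclideanSpace ℝ (Fin (n + 1))) 1, K ξ ∂μH[(n : ℝ)]) = 1)
    (hKq : IntegrableOn (fun ξ => K ξ ^ ((n : ℝ) / ((n : ℝ) - 1)))
      (Metric.sphere (0 : EuclideanSpace ℝ (Fin (n + 1))) 1) μH[(n : ℝ)])
    (hΦm : AEStronglyMeasurable Φ
      (μH[(n : ℝ)].restrict (Metric.sphere (0 : EuclideanSpace ℝ (Fin (n + 1))) 1)))
    (hΦ𝒩 : ∀ᵐ ξ ∂(μH[(n : ℝ)].restrict (Metric.sphere (0 : EuclideanSpace ℝ (Fin (n + 1))) 1)),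
      Φ ξ ∈ 𝒩) :
    Metric.infDist
        (∫ ξ in Metric.sphere (0 : EuclideanSpace ℝ (Fin (n + 1))) 1, K ξ • Φ ξ ∂μH[(n : ℝ)]) 𝒩
      ≤ ((∫ ξ in Metric.sphere (0 : EuclideanSpace ℝ (Fin (n + 1))) 1,
            K ξ ^ ((n : ℝ) / ((n : ℝ) - 1)) ∂μH[(n : ℝ)]) ^ (((n : ℝ) - 1) / (n : ℝ))) ^ 2
        * (∫ ξ in Metric.sphere (0 : EuclideanSpace ℝ (Fin (n + 1))) 1,
            ∫ ζ in Metric.sphere (0 : EuclideanSpace ℝ (Fin (n + 1))) 1,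
              ‖Φ ξ - Φ ζ‖ ^ n ∂μH[(n : ℝ)] ∂μH[(n : ℝ)]) ^ (1 / (n : ℝ)) := by
  have : IsFiniteMeasure (μH[(n : ℝ)].restrict (sphere (0 : EuclideanSpace ℝ (Fin (n + 1))) 1)) :=
    isFiniteMeasure_restrict.mpr EuclideanSpace.hausdorffMeasure_sphere_lt_top.ne
  have hpq : (n : ℝ).HolderConjugate ((n : ℝ) / ((n : ℝ) - 1)) :=
    .conjExponent (by exact_mod_cast hn)
  have hKae : 0 ≤ᵐ[μH[(n : ℝ)].restrict (sphere 0 1)] K :=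
    (ae_restrict_mem isClosed_sphere.measurableSet).mono hK0
  have hKLq : MemLp K (ENNReal.ofReal ((n : ℝ) / ((n : ℝ) - 1)))
      (μH[(n : ℝ)].restrict (sphere 0 1)) := by
    refine (integrable_norm_rpow_iff hKint.aestronglyMeasurable (by simpa using hpq.symm.pos)
      ENNReal.ofReal_ne_top).mp (hKq.congr ?_)
    filter_upwards [hKae] with ξ hξ
    rw [Real.norm_of_nonneg hξ, ENNReal.toReal_ofReal hpq.symm.nonneg]
  simpa only [Real.rpow_natCast, one_div_div] using
    infDist_integral_smul_le hpq h𝒩c.isBounded hKae hK1 hKLq hΦm hΦ𝒩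

/-- Let `n ≥ 2`, `𝒩 ⊆ ℝᵐ` nonempty compact, `K : Sⁿ → [0,∞)` with `∫ K dσ = 1` and
`K ∈ L^{n/(n-1)}(Sⁿ)`, and `Φ : Sⁿ → ℝᵐ` σ-measurable with `Φ ∈ 𝒩` σ-a.e.  Then
`dist(∫ K Φ dσ, 𝒩) ≤ ‖K‖²_{L^{n/(n-1)}} (∫∫ |Φ(ξ) − Φ(ζ)|ⁿ dσ dσ)^{1/n}`. -/
theorem dist_of_average_le_holder (n m : ℕ) (hn : 2 ≤ n) (hm : 1 ≤ m)
    (𝒩 : Set (EuclideanSpace ℝ (Fin m))) (h𝒩ne : 𝒩.Nonempty) (h𝒩c : IsCompact 𝒩)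
    (K : EuclideanSpace ℝ (Fin (n + 1)) → ℝ)
    (Φ : EuclideanSpace ℝ (Fin (n + 1)) → EuclideanSpace ℝ (Fin m))
    (hK0 : ∀ ξ ∈ Metric.sphere (0 : EuclideanSpace ℝ (Fin (n + 1))) 1, 0 ≤ K ξ)
    (hKint : IntegrableOn K (Metric.sphere (0 : EuclideanSpace ℝ (Fin (n + 1))) 1) μH[(n : ℝ)])
    (hK1 : (∫ ξ in Metric.sphere (0 : EuclideanSpace ℝ (Fin (n + 1))) 1, K ξ ∂μH[(n : ℝ)]) = 1)
    (hKq : IntegrableOn (fun ξ => K ξ ^ ((n : ℝ) / ((n : ℝ) - 1)))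
      (Metric.sphere (0 : EuclideanSpace ℝ (Fin (n + 1))) 1) μH[(n : ℝ)])
    (hΦm : AEStronglyMeasurable Φ
      (μH[(n : ℝ)].restrict (Metric.sphere (0 : EuclideanSpace ℝ (Fin (n + 1))) 1)))
    (hΦ𝒩 : ∀ᵐ ξ ∂(μH[(n : ℝ)].restrict (Metric.sphere (0 : EuclideanSpace ℝ (Fin (n + 1))) 1)),
      Φ ξ ∈ 𝒩) :
    Metric.infDist
        (∫ ξ in Metric.sphere (0 : EuclideanSpace ℝ (Fin (n + 1))) 1, K ξ • Φ ξ ∂μH[(n : ℝ)]) 𝒩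
      ≤ ((∫ ξ in Metric.sphere (0 : EuclideanSpace ℝ (Fin (n + 1))) 1,
            K ξ ^ ((n : ℝ) / ((n : ℝ) - 1)) ∂μH[(n : ℝ)]) ^ (((n : ℝ) - 1) / (n : ℝ))) ^ 2
        * (∫ ξ in Metric.sphere (0 : EuclideanSpace ℝ (Fin (n + 1))) 1,
            ∫ ζ in Metric.sphere (0 : EuclideanSpace ℝ (Fin (n + 1))) 1,
              ‖Φ ξ - Φ ζ‖ ^ n ∂μH[(n : ℝ)] ∂μH[(n : ℝ)]) ^ (1 / (n : ℝ)) :=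
  dist_of_average_le_holder_general n m hn 𝒩 h𝒩c K Φ hK0 hKint hK1 hKq hΦm hΦ𝒩
end

section
/- Let n ≥ 2 and m ≥ 1 be integers and let ω : ℝ^n → ℝ^m be continuously differentiable. Let κ : ℝ^n \ {0} → ℝ^n be the inversion κ(x) = x/|x|². Then ∫_{B(0,1) \ {0}} ‖D(ω∘κ)(x)‖^n dx = ∫_{{y ∈ ℝ^n : |y| > 1}} ‖Dω(y)‖^n dy, where both sides are integrals of nonnegative functions with values in [0, ∞] and they are equal (in particular, one is finite if and only if the other is). -/
/-!
The derivative of the inversion `ι` in the sphere of centre `c` and radius `R` at `x ≠ c` is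
`(R / |x - c|)²` times a reflection. Composing with it therefore multiplies operator norms by
`(R / |x - c|)²`, and its Jacobian is `(R / |x - c|)^(2n)`, so
`‖D(ω ∘ ι)(x)‖ⁿ = |det Dι(x)| · ‖Dω(ι x)‖ⁿ` pointwise, and the change of variables formula turns
the integral over a set `s` into the integral over `ι '' s`. The inversion maps the punctured ball
onto the exterior of the sphere.
-/

open MeasureTheory Metric EuclideanGeometry Module

section Inversion

variable {E F : Type*} [NormedAddCommGroup E] [InnerProductSpace ℝ E]
  [NormedAddCommGroup F] [NormedSpace ℝ F] {c x : E} {R : ℝ}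

noncomputable def inversionFDeriv (c : E) (R : ℝ) (x : E) : E →L[ℝ] E :=
  (R / dist x c) ^ 2 • ((ℝ ∙ (x - c))ᗮ.reflection : E →L[ℝ] E)

theorem hasFDerivAt_inversionFDeriv (hx : x ≠ c) :
    HasFDerivAt (inversion c R) (inversionFDeriv c R x) x :=
  hasFDerivAt_inversion hx

theorem norm_comp_inversionFDeriv (A : E →L[ℝ] F) :
    ‖A.comp (inversionFDeriv c R x)‖ = (R / dist x c) ^ 2 * ‖A‖ := by
  rw [inversionFDeriv, ContinuousLinearMap.comp_smul, norm_smul,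
    Real.norm_of_nonneg (by positivity), A.opNorm_comp_linearIsometryEquiv]

theorem abs_det_inversionFDeriv [FiniteDimensional ℝ E] :
    |(inversionFDeriv c R x).det| = (R / dist x c) ^ (2 * finrank ℝ E) := by
  have hreflection :
      |LinearMap.det ((ℝ ∙ (x - c))ᗮ.reflection : E →L[ℝ] E).toLinearMap| = 1 :=
    (congrArg abs (Submodule.det_reflection _)).trans (by simp)
  rw [inversionFDeriv, ContinuousLinearMap.det, ContinuousLinearMap.toLinearMap_smul,
    LinearMap.det_smul, abs_mul, hreflection, mul_one, abs_of_nonneg (by positivity), pow_mul]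

theorem fderiv_comp_inversion (ω : E → F) (hR : R ≠ 0) (hx : x ≠ c) :
    fderiv ℝ (ω ∘ inversion c R) x
      = (fderiv ℝ ω (inversion c R x)).comp (inversionFDeriv c R x) := by
  by_cases hω : DifferentiableAt ℝ ω (inversion c R x)
  · exact (hω.hasFDerivAt.comp x (hasFDerivAt_inversionFDeriv hx)).fderiv
  · rw [fderiv_zero_of_not_differentiableAt hω, ContinuousLinearMap.zero_comp]
    refine fderiv_zero_of_not_differentiableAt fun h ↦ hω ?_
    -- `ω = (ω ∘ ι) ∘ ι` because the inversion `ι` is an involution.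
    have hι : DifferentiableAt ℝ (inversion c R) (inversion c R x) :=
      (hasFDerivAt_inversionFDeriv ((inversion_eq_center hR).not.2 hx)).differentiableAt
    rw [← inversion_inversion c hR x] at h
    simpa [Function.comp_def, inversion_inversion c hR] using h.comp _ hι

theorem inversion_image_ball_diff_center (hR : 0 < R) :
    inversion c R '' (ball c R \ {c}) = {y | R < dist y c} := by
  rw [(inversion_involutive c hR.ne').image_eq_preimage_symm]
  ext x
  rcases eq_or_ne x c with rfl | hx
  · simp [inversion_self, hR.le]
  · simp only [Set.mem_preimage, Set.mem_ofPred_eq, Set.mem_sdiff, mem_ball, Set.mem_singleton_iff,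
      dist_inversion_center, inversion_eq_center hR.ne', hx, not_false_eq_true, and_true]
    rw [div_lt_iff₀ (dist_pos.2 hx), sq, mul_lt_mul_iff_right₀ hR]

variable [FiniteDimensional ℝ E] [MeasurableSpace E] [BorelSpace E] (μ : Measure E)
  [μ.IsAddHaarMeasure]

theorem lintegral_image_inversion_energy (ω : E → F) (hR : R ≠ 0) {s : Set E}
    (hs : MeasurableSet s) (hcs : c ∉ s) :
    ∫⁻ y in inversion c R '' s, ENNReal.ofReal (‖fderiv ℝ ω y‖ ^ finrank ℝ E) ∂μ
      = ∫⁻ x in s, ENNReal.ofReal (‖fderiv ℝ (ω ∘ inversion c R) x‖ ^ finrank ℝ E) ∂μ := by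
  have hne : ∀ x ∈ s, x ≠ c := fun x hx h ↦ hcs (h ▸ hx)
  rw [lintegral_image_eq_lintegral_abs_det_fderiv_mul μ hs
    (fun x hx ↦ (hasFDerivAt_inversionFDeriv (hne x hx)).hasFDerivWithinAt)
    (inversion_injective c hR).injOn]
  refine setLIntegral_congr_fun hs fun x hx ↦ ?_
  rw [fderiv_comp_inversion ω hR (hne x hx), norm_comp_inversionFDeriv, abs_det_inversionFDeriv,
    pow_mul, mul_pow, ← ENNReal.ofReal_mul (by positivity)]

end Inversion

theorem inversion_energy_invariance_general (n m : ℕ)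
    (ω : EuclideanSpace ℝ (Fin n) → EuclideanSpace ℝ (Fin m)) :
    (∫⁻ x in ball (0 : EuclideanSpace ℝ (Fin n)) 1 \ {0},
        ENNReal.ofReal (‖fderiv ℝ (fun y => ω ((‖y‖ ^ 2)⁻¹ • y)) x‖ ^ n))
      = ∫⁻ y in {y : EuclideanSpace ℝ (Fin n) | 1 < ‖y‖},
        ENNReal.ofReal (‖fderiv ℝ ω y‖ ^ n) := by
  have hκ : (fun y => ω ((‖y‖ ^ 2)⁻¹ • y)) = ω ∘ inversion 0 1 := by
    ext1 y
    simp [inversion_def, one_div, inv_pow]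
  have hexterior :
      {y : EuclideanSpace ℝ (Fin n) | 1 < ‖y‖} = inversion 0 1 '' (ball 0 1 \ {0}) := by
    simp [inversion_image_ball_diff_center one_pos]
  rw [hκ, hexterior]
  simpa only [finrank_euclideanSpace_fin] using (lintegral_image_inversion_energy volume ω
    one_ne_zero (measurableSet_ball.diff (measurableSet_singleton 0)) (by simp)).symm

/-- Conformal invariance of the `n`-energy under the inversion `κ(x) = x/|x|²`: for a `C¹`
map `ω : ℝⁿ → ℝᵐ`,
`∫_{B(0,1)\{0}} ‖D(ω∘κ)‖ⁿ = ∫_{|y|>1} ‖Dω‖ⁿ` as integrals with values in `[0,∞]`. -/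
theorem inversion_energy_invariance (n m : ℕ) (hn : 2 ≤ n) (hm : 1 ≤ m)
    (ω : EuclideanSpace ℝ (Fin n) → EuclideanSpace ℝ (Fin m))
    (hω : ContDiff ℝ 1 ω) :
    (∫⁻ x in ball (0 : EuclideanSpace ℝ (Fin n)) 1 \ {0},
        ENNReal.ofReal (‖fderiv ℝ (fun y => ω ((‖y‖ ^ 2)⁻¹ • y)) x‖ ^ n))
      = ∫⁻ y in {y : EuclideanSpace ℝ (Fin n) | 1 < ‖y‖},
        ENNReal.ofReal (‖fderiv ℝ ω y‖ ^ n) :=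
  inversion_energy_invariance_general n m ω
end
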